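/- arXiv:1510.00641 — 3 statements merged into one kernel-verified Lean document; each statement's English description precedes it below -/
import Mathlib

section
/- Let r : ℕ → ℚ be a fundamental sequence with modulus f : ℕ → ℕ. Then the set X(r,f) := {s : ℚ | ∃ m : ℕ, s < r (f m) - (1/2)^m} is a left cut: it is bounded (∃ q, q ∈ X(r,f) and ∃ q', q' ∉ X(r,f)), open (∀ q ∈ X(r,f), ∃ q' ∈ X(r,f), q < q'), and located (∀ q q' : ℚ, q < q' → q ∈ X(r,f) ∨ q' ∉ X(r,f)). -/
/-- A sequence of rationals is fundamental with modulus `f` if beyond `f k`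
all terms are within `(1/2)^k` of each other. -/
def IsFundamental (r : ℕ → ℚ) (f : ℕ → ℕ) : Prop :=
  ∀ k m n : ℕ, f k ≤ m → f k ≤ n → |r m - r n| < (1/2 : ℚ)^k

/-- The left cut determined by a fundamental sequence with modulus. -/
def cutOf (r : ℕ → ℚ) (f : ℕ → ℕ) : Set ℚ :=
  {s : ℚ | ∃ m : ℕ, s < r (f m) - (1/2 : ℚ)^m}

lemma cutOf_key (r : ℕ → ℚ) (f : ℕ → ℕ) (hrf : IsFundamental r f) (m k : ℕ) :
    r (f m) - (1/2 : ℚ)^m < r (f k) + (1/2 : ℚ)^k := by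
  set n := max (f m) (f k)
  have h1 := hrf m (f m) n le_rfl (le_max_left _ _)
  have h2 := hrf k n (f k) (le_max_right _ _) le_rfl
  rw [abs_lt] at h1 h2
  linarith [h1.1, h1.2, h2.1, h2.2]

theorem cutOf_isLeftCut (r : ℕ → ℚ) (f : ℕ → ℕ) (hrf : IsFundamental r f) :
    ((∃ q : ℚ, q ∈ cutOf r f) ∧ (∃ q' : ℚ, q' ∉ cutOf r f)) ∧
    (∀ q ∈ cutOf r f, ∃ q' ∈ cutOf r f, q < q') ∧
    (∀ q q' : ℚ, q < q' → q ∈ cutOf r f ∨ q' ∉ cutOf r f) := by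
  refine ⟨⟨⟨r (f 0) - 2, ⟨0, by norm_num⟩⟩, ⟨r (f 0) + 1, ?_⟩⟩, ?_, ?_⟩
  · rintro ⟨m, hm⟩
    have := cutOf_key r f hrf m 0
    simp only [pow_zero] at this
    linarith
  · rintro q ⟨m, hm⟩
    exact ⟨(q + (r (f m) - (1/2 : ℚ)^m)) / 2, ⟨m, by linarith⟩, by linarith⟩
  · intro q q' hqq'
    obtain ⟨k, hk⟩ : ∃ k : ℕ, (1/2 : ℚ)^k < (q' - q) / 2 := by
      obtain ⟨k, hk⟩ := exists_pow_lt_of_lt_one (by linarith : (0:ℚ) < (q' - q)/2)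
        (by norm_num : (1/2 : ℚ) < 1)
      exact ⟨k, hk⟩
    by_cases h : q < r (f k) - (1/2 : ℚ)^k
    · exact Or.inl ⟨k, h⟩
    · push_neg at h
      refine Or.inr ?_
      rintro ⟨m, hm⟩
      have := cutOf_key r f hrf m k
      linarith
end

section
/- Let r : ℕ → ℚ be a fundamental sequence with modulus f : ℕ → ℕ and r' : ℕ → ℚ a fundamental sequence with modulus f' : ℕ → ℕ. Then X(r,f) = X(r',f') (as sets of rationals) if and only if r and r' coincide. -/
/-- Two sequences of rationals coincide. -/
def Coincide (r r' : ℕ → ℚ) : Prop :=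
  ∀ k : ℕ, ∃ n : ℕ, ∀ m : ℕ, n ≤ m → |r m - r' m| < (1/2 : ℚ)^k

lemma cut_subset_aux (r r' : ℕ → ℚ) (f f' : ℕ → ℕ)
    (hrf : IsFundamental r f) (hrf' : IsFundamental r' f')
    (h : cutOf r f ⊆ cutOf r' f') (j : ℕ) :
    ∃ N, ∀ n, N ≤ n → r n - r' n < 3 * (1/2:ℚ)^j := by
  have hpow : (0:ℚ) < (1/2:ℚ)^j := pow_pos (by norm_num) j
  have hs : (r (f j) - 2*(1/2:ℚ)^j) ∈ cutOf r f := ⟨j, by linarith⟩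
  obtain ⟨m', hm'⟩ := h hs
  refine ⟨max (f j) (f' m'), fun n hn => ?_⟩
  have h1 := hrf j n (f j) (le_trans (le_max_left _ _) hn) le_rfl
  have h2 := hrf' m' (f' m') n le_rfl (le_trans (le_max_right _ _) hn)
  rw [abs_sub_lt_iff] at h1 h2
  linarith [h1.1, h2.1]

lemma coincide_subset_aux (r r' : ℕ → ℚ) (f f' : ℕ → ℕ)
    (hrf : IsFundamental r f) (hrf' : IsFundamental r' f')
    (h : Coincide r r') : cutOf r f ⊆ cutOf r' f' := by
  rintro s ⟨m, hm⟩
  have hεpos : (0:ℚ) < (r (f m) - (1/2:ℚ)^m - s) / 3 := by linarith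
  obtain ⟨k, hk⟩ := exists_pow_lt_of_lt_one hεpos (by norm_num : (1/2:ℚ) < 1)
  obtain ⟨N, hN⟩ := h k
  set n := max (f m) (max (f' k) N) with hn
  have h1 := hrf m n (f m) (le_max_left _ _) le_rfl
  have h2 := hrf' k (f' k) n le_rfl (le_trans (le_max_left _ _) (le_max_right _ _))
  have h3 := hN n (le_trans (le_max_right _ _) (le_max_right _ _))
  rw [abs_sub_lt_iff] at h1 h2 h3
  exact ⟨k, by linarith [h1.2, h2.2, h3.1]⟩

theorem cutOf_eq_iff_coincide (r r' : ℕ → ℚ) (f f' : ℕ → ℕ)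
    (hrf : IsFundamental r f) (hrf' : IsFundamental r' f') :
    cutOf r f = cutOf r' f' ↔ Coincide r r' := by
  constructor
  · intro h k
    obtain ⟨N1, hN1⟩ := cut_subset_aux r r' f f' hrf hrf' h.le (k+2)
    obtain ⟨N2, hN2⟩ := cut_subset_aux r' r f' f hrf' hrf h.ge (k+2)
    refine ⟨max N1 N2, fun n hn => ?_⟩
    rw [abs_sub_lt_iff]
    have e : 3 * (1/2:ℚ)^(k+2) < (1/2:ℚ)^k := by
      have hpow : (0:ℚ) < (1/2:ℚ)^k := pow_pos (by norm_num) k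
      rw [pow_succ, pow_succ]
      nlinarith
    constructor
    · linarith [hN1 n (le_trans (le_max_left _ _) hn)]
    · linarith [hN2 n (le_trans (le_max_right _ _) hn)]
  · intro h
    have hsymm : Coincide r' r := fun k => by
      obtain ⟨N, hN⟩ := h k
      exact ⟨N, fun m hm => by rw [abs_sub_comm]; exact hN m hm⟩
    exact le_antisymm (coincide_subset_aux r r' f f' hrf hrf' h)
      (coincide_subset_aux r' r f' f hrf' hrf hsymm)
end

section
/- Let r : ℕ → ℚ be a fundamental sequence with modulus f : ℕ → ℕ, and suppose the sequence of real numbers (↑(r n)) converges to x : ℝ. Then X(r,f) = {s : ℚ | (↑s : ℝ) < x}; that is, the left cut determined by a fundamental sequence consists exactly of the rationals below its real limit. -/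
theorem cutOf_eq_ratsBelow_limit (r : ℕ → ℚ) (f : ℕ → ℕ) (x : ℝ)
    (hrf : IsFundamental r f)
    (hlim : Filter.Tendsto (fun n => (r n : ℝ)) Filter.atTop (nhds x)) :
    cutOf r f = {s : ℚ | (s : ℝ) < x} := by
  have key : ∀ k : ℕ, ∀ n : ℕ, f k ≤ n →
      (r (f k) : ℝ) - (1/2 : ℝ)^k ≤ r n ∧ (r n : ℝ) ≤ (r (f k) : ℝ) + (1/2 : ℝ)^k := by
    intro k n hn
    have := hrf k (f k) n le_rfl hn
    have h2 : |(r (f k) : ℝ) - (r n : ℝ)| < (1/2 : ℝ)^k := by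
      have := (Rat.cast_lt (K := ℝ)).2 this
      push_cast at this
      exact this
    have := abs_lt.mp h2
    constructor <;> linarith [this.1, this.2]
  ext s
  simp only [cutOf, Set.mem_setOf_eq]
  constructor
  · rintro ⟨m, hm⟩
    have hx : ((r (f m) : ℝ) - (1/2 : ℝ)^m) ≤ x := by
      refine ge_of_tendsto hlim ?_
      filter_upwards [Filter.eventually_atTop.2 ⟨f m, fun n hn => hn⟩] with n hn
      exact (key m n hn).1
    have h1 : (s : ℝ) < (r (f m) : ℝ) - (1/2 : ℝ)^m := by
      have := (Rat.cast_lt (K := ℝ)).2 hm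
      push_cast at this
      exact this
    linarith
  · intro hs
    obtain ⟨k, hk⟩ : ∃ k : ℕ, (1/2 : ℝ)^k < (x - (s : ℝ))/2 :=
      exists_pow_lt_of_lt_one (by linarith : (0:ℝ) < (x - s)/2)
        (by norm_num : (1/2 : ℝ) < 1)
    have hx : x ≤ (r (f k) : ℝ) + (1/2 : ℝ)^k := by
      refine le_of_tendsto hlim ?_
      filter_upwards [Filter.eventually_atTop.2 ⟨f k, fun n hn => hn⟩] with n hn
      exact (key k n hn).2
    refine ⟨k, ?_⟩
    have : (s : ℝ) < (r (f k) : ℝ) - (1/2 : ℝ)^k := by linarith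
    rw [← Rat.cast_lt (K := ℝ)]
    push_cast
    exact this
end
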